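/- (Theorem 3.1(i)) Assume there exists a Hermitian X_P with R_{X_P} positive definite and X_P ≤ R(X_P), and there exists a Hermitian matrix in dom(R) with ρ(T̂) < 1. Let X_0 ∈ S_≥ and define X_{k+1} := R(X_k) for k ≥ 0. Then the sequence is well-defined (each R_{X_k} is invertible, indeed positive definite), and for all k ≥ 0: X_k ∈ S_≥, ρ(T̂_{X_k}) < 1, and X_k ≥ R(X_k). -/

import Mathlib

open Matrix Filter Topology
open scoped ComplexOrder

noncomputable section

namespace CDARE

variable {n m : ℕ}

/-- Entrywise complex conjugate of a matrix. -/
def mconj {p q : ℕ} (M : Matrix (Fin p) (Fin q) ℂ) : Matrix (Fin p) (Fin q) ℂ :=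
  M.map (starRingEnd ℂ)

/-- `hatM M = conj M * M`. -/
def hatM (M : Matrix (Fin n) (Fin n) ℂ) : Matrix (Fin n) (Fin n) ℂ := mconj M * M

/-- `R_X = R + Bᴴ X̄ B`. -/
def RX (R : Matrix (Fin m) (Fin m) ℂ) (B : Matrix (Fin n) (Fin m) ℂ)
    (X : Matrix (Fin n) (Fin n) ℂ) : Matrix (Fin m) (Fin m) ℂ :=
  R + Bᴴ * mconj X * B

/-- `F_X = R_X⁻¹ Bᴴ X̄ A`. -/
def FX (A : Matrix (Fin n) (Fin n) ℂ) (B : Matrix (Fin n) (Fin m) ℂ)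
    (R : Matrix (Fin m) (Fin m) ℂ) (X : Matrix (Fin n) (Fin n) ℂ) :
    Matrix (Fin m) (Fin n) ℂ :=
  (RX R B X)⁻¹ * (Bᴴ * mconj X * A)

/-- `T_X = A - B F_X`. -/
def TX (A : Matrix (Fin n) (Fin n) ℂ) (B : Matrix (Fin n) (Fin m) ℂ)
    (R : Matrix (Fin m) (Fin m) ℂ) (X : Matrix (Fin n) (Fin n) ℂ) :
    Matrix (Fin n) (Fin n) ℂ :=
  A - B * FX A B R X

/-- The Riccati operator `R(X)`. -/
def Rop (A : Matrix (Fin n) (Fin n) ℂ) (B : Matrix (Fin n) (Fin m) ℂ)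
    (R : Matrix (Fin m) (Fin m) ℂ) (H : Matrix (Fin n) (Fin n) ℂ)
    (X : Matrix (Fin n) (Fin n) ℂ) : Matrix (Fin n) (Fin n) ℂ :=
  Aᴴ * mconj X * A - Aᴴ * mconj X * B * (RX R B X)⁻¹ * (Bᴴ * mconj X * A) + H

/-- `H_X = H + F_Xᴴ R F_X`. -/
def HX (A : Matrix (Fin n) (Fin n) ℂ) (B : Matrix (Fin n) (Fin m) ℂ)
    (R : Matrix (Fin m) (Fin m) ℂ) (H : Matrix (Fin n) (Fin n) ℂ)
    (X : Matrix (Fin n) (Fin n) ℂ) : Matrix (Fin n) (Fin n) ℂ :=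
  H + (FX A B R X)ᴴ * R * FX A B R X

/-- `K(Y, X) = (F_Y - F_X)ᴴ R_X (F_Y - F_X)`. -/
def Kop (A : Matrix (Fin n) (Fin n) ℂ) (B : Matrix (Fin n) (Fin m) ℂ)
    (R : Matrix (Fin m) (Fin m) ℂ) (Y X : Matrix (Fin n) (Fin n) ℂ) :
    Matrix (Fin n) (Fin n) ℂ :=
  (FX A B R Y - FX A B R X)ᴴ * RX R B X * (FX A B R Y - FX A B R X)

/-- Conjugate Stein operator `C_C(X) = X - Cᴴ X̄ C`. -/
def CStein (C X : Matrix (Fin n) (Fin n) ℂ) : Matrix (Fin n) (Fin n) ℂ :=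
  X - Cᴴ * mconj X * C

/-- The set `S_≥`. -/
def Sge (A : Matrix (Fin n) (Fin n) ℂ) (B : Matrix (Fin n) (Fin m) ℂ)
    (R : Matrix (Fin m) (Fin m) ℂ) (H : Matrix (Fin n) (Fin n) ℂ) :
    Set (Matrix (Fin n) (Fin n) ℂ) :=
  {X | X.IsHermitian ∧ ∃ XT : Matrix (Fin n) (Fin n) ℂ, XT.IsHermitian ∧
      IsUnit (RX R B XT) ∧ spectralRadius ℂ (hatM (TX A B R XT)) < 1 ∧
      (CStein (TX A B R XT) X - HX A B R H XT).PosSemidef}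

end CDARE

/-!
Let `Y` witness `X ∈ S_≥`, so `W := C_{T_Y}(X) - H_Y ≥ 0`. Everything rests on the identity
`C_{T_Y}(X) - H_Y = X - R(X) - K(Y, X)`, valid for every `Y` once `R_X` is invertible.
Applied to `X_P` it gives `C_{T_Y}(X - X_P) ≥ 0`, so `X ≥ X_P` by the Stein lemma for `T_Y`, whence
`R_X ≥ R_{X_P} > 0`. Applied to `X` it gives `X - R(X) = W + K(Y, X) ≥ 0`. With `Y = X`, where `K`
vanishes, it gives `C_{T_X}(R(X)) - H_X = T_Xᴴ (X - R(X))‾ T_X ≥ 0`, so `X` witnesses `R(X) ∈ S_≥`.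
Finally `C_{T_X}(X - X_P) ≥ K(Y, X)`, while on an eigenvector `v` of `T̂_X` with eigenvalue `|λ| ≥ 1`
the form of `C_{T_X}(X - X_P)` summed over `v` and `(T_X v)‾` is `(1 - |λ|²) v* (X - X_P) v ≤ 0`.
So `F_Y - F_X` kills both vectors, `T_Y` agrees with `T_X` on them, and `λ` is an eigenvalue of `T̂_Y`.
-/

open scoped ENNReal

theorem tendsto_pow_atTop_nhds_zero_of_spectralRadius_lt_one {𝔸 : Type*} [NormedRing 𝔸]
    [NormedAlgebra ℂ 𝔸] [CompleteSpace 𝔸] {a : 𝔸} (ha : spectralRadius ℂ a < 1) :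
    Tendsto (fun k : ℕ => a ^ k) atTop (𝓝 0) := by
  obtain ⟨c, hac, hc1⟩ := ENNReal.lt_iff_exists_nnreal_btwn.mp ha
  have hgelfand := spectrum.pow_nnnorm_pow_one_div_tendsto_nhds_spectralRadius a
  have hbound : ∀ᶠ k : ℕ in atTop, ‖a ^ k‖ ≤ (c : ℝ) ^ k := by
    filter_upwards [hgelfand.eventually_lt_const hac, eventually_gt_atTop 0] with k hk hk0
    rw [one_div, ENNReal.rpow_inv_lt_iff (by positivity), ENNReal.rpow_natCast] at hk
    exact_mod_cast hk.le
  exact squeeze_zero_norm' hbound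
    (tendsto_pow_atTop_nhds_zero_of_lt_one c.coe_nonneg (by exact_mod_cast hc1))

namespace Matrix

variable {ι : Type*} [Fintype ι] [DecidableEq ι]

theorem mem_spectrum_iff_exists_mulVec_eq_smul {K : Type*} [Field K] {M : Matrix ι ι K} {μ : K} :
    μ ∈ spectrum K M ↔ ∃ v ≠ 0, M *ᵥ v = μ • v := by
  rw [← spectrum_toLin', ← Module.End.hasEigenvalue_iff_mem_spectrum,
    Module.End.hasEigenvalue_iff, Submodule.ne_bot_iff]
  simp [toLin'_apply, and_comm]

attribute [local instance] Matrix.linftyOpNormedAddCommGroup Matrix.linftyOpNormedRing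
  Matrix.linftyOpNormedAlgebra

theorem posSemidef_of_spectralRadius_lt_one {M D : Matrix ι ι ℂ} (hM : spectralRadius ℂ M < 1)
    (hD : D.IsHermitian) (h : (D - Mᴴ * D * M).PosSemidef) : D.PosSemidef := by
  have hpow : ∀ k : ℕ, (D - (M ^ k)ᴴ * D * M ^ k).PosSemidef := by
    intro k
    induction k with
    | zero => simpa using PosSemidef.zero
    | succ k ih =>
      have e : D - (M ^ (k + 1))ᴴ * D * M ^ (k + 1)
          = (D - Mᴴ * D * M) + Mᴴ * (D - (M ^ k)ᴴ * D * M ^ k) * M := by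
        simp only [pow_succ, conjTranspose_mul, Matrix.mul_sub, Matrix.sub_mul, Matrix.mul_assoc]
        abel
      rw [e]
      exact h.add (ih.conjTranspose_mul_mul_same M)
  refine .of_dotProduct_mulVec_nonneg hD fun x => ?_
  have hcont : Continuous fun N : Matrix ι ι ℂ => star x ⬝ᵥ ((Nᴴ * D * N) *ᵥ x) := by
    fun_prop
  have hlim : Tendsto (fun k : ℕ => star x ⬝ᵥ (((M ^ k)ᴴ * D * M ^ k) *ᵥ x)) atTop (𝓝 0) := by
    have h0 := (hcont.tendsto 0).comp (tendsto_pow_atTop_nhds_zero_of_spectralRadius_lt_one hM)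
    simp only [conjTranspose_zero, Matrix.zero_mul, Matrix.mul_zero, zero_mulVec,
      dotProduct_zero] at h0
    exact h0
  refine le_of_tendsto' hlim fun k => ?_
  have := (hpow k).dotProduct_mulVec_nonneg x
  rwa [sub_mulVec, dotProduct_sub, sub_nonneg] at this

end Matrix

namespace CDARE

variable {n m : ℕ}

section Conj

variable {p q r : ℕ}

@[simp] lemma mconj_apply (M : Matrix (Fin p) (Fin q) ℂ) (i : Fin p) (j : Fin q) :
    mconj M i j = star (M i j) := rfl

lemma mconj_sub (M N : Matrix (Fin p) (Fin q) ℂ) : mconj (M - N) = mconj M - mconj N := by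
  ext i j; simp

lemma mconj_mul (M : Matrix (Fin p) (Fin q) ℂ) (N : Matrix (Fin q) (Fin r) ℂ) :
    mconj (M * N) = mconj M * mconj N := Matrix.map_mul

lemma mconj_mconj (M : Matrix (Fin p) (Fin q) ℂ) : mconj (mconj M) = M := by
  ext i j; simp

lemma mconj_conjTranspose (M : Matrix (Fin p) (Fin q) ℂ) : mconj Mᴴ = Mᵀ := by
  ext i j; simp [conjTranspose_apply]

lemma conjTranspose_mconj (M : Matrix (Fin p) (Fin q) ℂ) : (mconj M)ᴴ = Mᵀ := by
  ext i j; simp [conjTranspose_apply]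

lemma _root_.Matrix.IsHermitian.mconj {X : Matrix (Fin p) (Fin p) ℂ} (hX : X.IsHermitian) :
    (mconj X).IsHermitian := by
  rw [IsHermitian, conjTranspose_mconj, ← mconj_conjTranspose, hX.eq]

lemma _root_.Matrix.PosSemidef.mconj {X : Matrix (Fin p) (Fin p) ℂ} (hX : X.PosSemidef) :
    (mconj X).PosSemidef := by
  rw [← hX.isHermitian.eq, mconj_conjTranspose]
  exact hX.transpose

lemma mconj_mulVec (M : Matrix (Fin p) (Fin q) ℂ) (w : Fin q → ℂ) :
    mconj M *ᵥ w = star (M *ᵥ star w) := by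
  ext i; simp [mulVec, dotProduct, mul_comm]

end Conj

lemma sub_conjTranspose_hatM_mul_mul (C D : Matrix (Fin n) (Fin n) ℂ) :
    D - (hatM C)ᴴ * D * hatM C = CStein C D + Cᴴ * mconj (CStein C D) * C := by
  simp only [CStein, hatM, mconj_sub, mconj_mul, mconj_conjTranspose, mconj_mconj,
    conjTranspose_mul, conjTranspose_mconj, Matrix.mul_sub, Matrix.sub_mul, Matrix.mul_assoc]
  abel

theorem posSemidef_of_posSemidef_CStein {C D : Matrix (Fin n) (Fin n) ℂ}
    (hC : spectralRadius ℂ (hatM C) < 1) (hD : D.IsHermitian) (h : (CStein C D).PosSemidef) :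
    D.PosSemidef := by
  refine posSemidef_of_spectralRadius_lt_one hC hD ?_
  rw [sub_conjTranspose_hatM_mul_mul]
  exact h.add (h.mconj.conjTranspose_mul_mul_same C)

lemma CStein_sub (C X Y : Matrix (Fin n) (Fin n) ℂ) :
    CStein C (X - Y) = CStein C X - CStein C Y := by
  simp only [CStein, mconj_sub, Matrix.mul_sub, Matrix.sub_mul]
  abel

section QuadForm

variable {p q : ℕ}

def quadForm (M : Matrix (Fin p) (Fin p) ℂ) (x : Fin p → ℂ) : ℂ := star x ⬝ᵥ (M *ᵥ x)

lemma quadForm_sub (M N : Matrix (Fin p) (Fin p) ℂ) (x : Fin p → ℂ) :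
    quadForm (M - N) x = quadForm M x - quadForm N x := by
  simp [quadForm, sub_mulVec, dotProduct_sub]

lemma quadForm_smul (M : Matrix (Fin p) (Fin p) ℂ) (c : ℂ) (x : Fin p → ℂ) :
    quadForm M (c • x) = (star c * c) * quadForm M x := by
  simp only [quadForm, mulVec_smul, star_smul, smul_dotProduct, dotProduct_smul, smul_eq_mul]
  ring

lemma quadForm_conjTranspose_mul_mul (C : Matrix (Fin p) (Fin q) ℂ) (M : Matrix (Fin p) (Fin p) ℂ)
    (x : Fin q → ℂ) : quadForm (Cᴴ * M * C) x = quadForm M (C *ᵥ x) := by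
  simp only [quadForm, star_mulVec, dotProduct_mulVec, vecMul_vecMul, Matrix.mul_assoc]

lemma quadForm_mconj (M : Matrix (Fin p) (Fin p) ℂ) (x : Fin p → ℂ) :
    quadForm (mconj M) x = star (quadForm M (star x)) := by
  rw [quadForm, quadForm, mconj_mulVec, star_star, ← star_dotProduct_star, dotProduct_comm]

lemma star_quadForm {M : Matrix (Fin p) (Fin p) ℂ} (hM : M.IsHermitian) (x : Fin p → ℂ) :
    star (quadForm M x) = quadForm M x := by
  rw [quadForm, ← star_dotProduct_star, star_star, star_mulVec, ← dotProduct_mulVec, hM.eq]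

end QuadForm

section Eigen

variable {T Θ : Matrix (Fin n) (Fin n) ℂ} {v : Fin n → ℂ} {μ : ℂ}

lemma mulVec_star_mulVec_of_hatM_mulVec (hv : hatM T *ᵥ v = μ • v) :
    T *ᵥ star (T *ᵥ v) = star μ • star v := by
  rw [hatM, ← mulVec_mulVec, mconj_mulVec] at hv
  simpa using congrArg star hv

lemma quadForm_CStein_add_quadForm_CStein_of_hatM_mulVec (hΘ : Θ.IsHermitian)
    (hv : hatM T *ᵥ v = μ • v) :
    quadForm (CStein T Θ) v + quadForm (CStein T Θ) (star (T *ᵥ v))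
      = (1 - μ * star μ) * quadForm Θ v := by
  simp only [CStein, quadForm_sub, quadForm_conjTranspose_mul_mul, quadForm_mconj,
    mulVec_star_mulVec_of_hatM_mulVec hv, star_star, quadForm_smul, star_quadForm hΘ]
  ring

attribute [local instance] Matrix.linftyOpNormedAddCommGroup Matrix.linftyOpNormedRing
  Matrix.linftyOpNormedAlgebra

/-- `E` kills every eigenvector `v` of `T̂` for an eigenvalue `|λ| ≥ 1`, and also `(T v)‾`, so `λ`
would be an eigenvalue of `Ŝ` as well. -/
theorem spectralRadius_hatM_lt_one_of_CStein_sub {T S Θ : Matrix (Fin n) (Fin n) ℂ}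
    {N : Matrix (Fin n) (Fin m) ℂ} {E : Matrix (Fin m) (Fin n) ℂ} {P : Matrix (Fin m) (Fin m) ℂ}
    (hS : spectralRadius ℂ (hatM S) < 1) (hΘ : Θ.PosSemidef) (hP : P.PosDef)
    (hTS : T - S = N * E) (hC : (CStein T Θ - Eᴴ * P * E).PosSemidef) :
    spectralRadius ℂ (hatM T) < 1 := by
  rcases isEmpty_or_nonempty (Fin n) with hn | hn
  · rw [spectrum.SpectralRadius.of_subsingleton]
    exact zero_lt_one
  refine spectrum.spectralRadius_lt_of_forall_lt _ fun μ hμ => ?_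
  by_contra! hμ1
  obtain ⟨v, hv0, hv⟩ := mem_spectrum_iff_exists_mulVec_eq_smul.mp hμ
  set u := star (T *ᵥ v)
  have hdom : ∀ w, quadForm P (E *ᵥ w) ≤ quadForm (CStein T Θ) w := fun w => by
    have := hC.dotProduct_mulVec_nonneg w
    rwa [← quadForm, quadForm_sub, quadForm_conjTranspose_mul_mul, sub_nonneg] at this
  have hsum : quadForm (CStein T Θ) v + quadForm (CStein T Θ) u ≤ 0 := by
    rw [quadForm_CStein_add_quadForm_CStein_of_hatM_mulVec hΘ.isHermitian hv]
    refine mul_nonpos_of_nonpos_of_nonneg ?_ (hΘ.dotProduct_mulVec_nonneg v)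
    rw [sub_nonpos, Complex.star_def, Complex.mul_conj, Complex.normSq_eq_norm_sq]
    have h1 : (1 : ℝ) ≤ ‖μ‖ := by exact_mod_cast hμ1
    exact_mod_cast one_le_pow₀ h1
  have hPv := hP.posSemidef.dotProduct_mulVec_nonneg (E *ᵥ v)
  have hPu := hP.posSemidef.dotProduct_mulVec_nonneg (E *ᵥ u)
  obtain ⟨hEv, hEu⟩ := (add_eq_zero_iff_of_nonneg hPv hPu).mp
    (le_antisymm ((add_le_add (hdom v) (hdom u)).trans hsum) (add_nonneg hPv hPu))
  have hagree : ∀ w, quadForm P (E *ᵥ w) = 0 → S *ᵥ w = T *ᵥ w := fun w hw => by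
    have hEw : E *ᵥ w = 0 := by
      by_contra hne
      exact (hP.dotProduct_mulVec_pos hne).ne' hw
    rw [← sub_eq_zero, ← sub_mulVec, ← neg_sub, hTS, neg_mulVec, ← mulVec_mulVec, hEw,
      mulVec_zero, neg_zero]
  have hSv : hatM S *ᵥ v = μ • v := by
    rw [hatM, ← mulVec_mulVec, hagree v hEv, mconj_mulVec, hagree u hEu,
      mulVec_star_mulVec_of_hatM_mulVec hv]
    simp
  have hle : (‖μ‖₊ : ℝ≥0∞) ≤ spectralRadius ℂ (hatM S) :=
    le_iSup₂ (α := ℝ≥0∞) μ (mem_spectrum_iff_exists_mulVec_eq_smul.mpr ⟨v, hv0, hSv⟩)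
  exact (hle.trans_lt hS).not_ge (by exact_mod_cast hμ1)

end Eigen

section Riccati

variable {A : Matrix (Fin n) (Fin n) ℂ} {B : Matrix (Fin n) (Fin m) ℂ}
  {R : Matrix (Fin m) (Fin m) ℂ} {H X : Matrix (Fin n) (Fin n) ℂ}

lemma RX_isHermitian (hR : R.IsHermitian) (hX : X.IsHermitian) : (RX R B X).IsHermitian :=
  hR.add (isHermitian_conjTranspose_mul_mul B hX.mconj)

lemma RX_eq_add_RX (Y : Matrix (Fin n) (Fin n) ℂ) :
    RX R B X = RX R B Y + Bᴴ * mconj (X - Y) * B := by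
  simp only [RX, mconj_sub, Matrix.mul_sub, Matrix.sub_mul]
  abel

lemma RX_mul_FX (hX : IsUnit (RX R B X)) : RX R B X * FX A B R X = Bᴴ * mconj X * A := by
  rw [FX, ← Matrix.mul_assoc, mul_nonsing_inv _ ((isUnit_iff_isUnit_det _).mp hX),
    Matrix.one_mul]

lemma conjTranspose_FX_mul_RX (hR : R.IsHermitian) (hX : X.IsHermitian)
    (hXu : IsUnit (RX R B X)) : (FX A B R X)ᴴ * RX R B X = Aᴴ * mconj X * B := by
  rw [← (RX_isHermitian hR hX).eq, ← conjTranspose_mul, RX_mul_FX hXu]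
  simp only [conjTranspose_mul, conjTranspose_conjTranspose, hX.mconj.eq, Matrix.mul_assoc]

lemma Rop_eq_sub_conjTranspose_FX_mul (hR : R.IsHermitian) (hX : X.IsHermitian)
    (hXu : IsUnit (RX R B X)) :
    Rop A B R H X = Aᴴ * mconj X * A - (FX A B R X)ᴴ * (RX R B X * FX A B R X) + H := by
  rw [Rop, ← conjTranspose_FX_mul_RX hR hX hXu, ← RX_mul_FX hXu, Matrix.mul_assoc _ (RX R B X),
    mul_nonsing_inv _ ((isUnit_iff_isUnit_det _).mp hXu), Matrix.mul_one]

/-- Completing the square around the gain `F_Y` of an arbitrary `Y`. -/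
lemma CStein_TX_sub_HX (hR : R.IsHermitian) (hX : X.IsHermitian) (hXu : IsUnit (RX R B X))
    (Y : Matrix (Fin n) (Fin n) ℂ) :
    CStein (TX A B R Y) X - HX A B R H Y = X - Rop A B R H X - Kop A B R Y X := by
  set f := FX A B R X
  set g := FX A B R Y
  have hBA : Bᴴ * (mconj X * A) = RX R B X * f := by rw [← Matrix.mul_assoc, RX_mul_FX hXu]
  have hAB : Aᴴ * (mconj X * (B * g)) = fᴴ * (RX R B X * g) := by
    simp only [← Matrix.mul_assoc]
    rw [conjTranspose_FX_mul_RX hR hX hXu]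
  have hBB : gᴴ * (Bᴴ * (mconj X * (B * g))) = gᴴ * (RX R B X * g) - gᴴ * (R * g) := by
    simp only [RX, Matrix.add_mul, Matrix.mul_add, Matrix.mul_assoc]
    abel
  rw [Rop_eq_sub_conjTranspose_FX_mul hR hX hXu, CStein, TX, HX, Kop]
  simp only [conjTranspose_sub, conjTranspose_mul, Matrix.sub_mul, Matrix.mul_sub,
    Matrix.mul_assoc]
  rw [hBA, hAB, hBB]
  abel

lemma Kop_self (X : Matrix (Fin n) (Fin n) ℂ) : Kop A B R X X = 0 := by
  simp [Kop]

lemma Kop_posSemidef (hX : (RX R B X).PosSemidef) (Y : Matrix (Fin n) (Fin n) ℂ) :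
    (Kop A B R Y X).PosSemidef :=
  hX.conjTranspose_mul_mul_same _

lemma TX_sub_TX (X Y : Matrix (Fin n) (Fin n) ℂ) :
    TX A B R X - TX A B R Y = B * (FX A B R Y - FX A B R X) := by
  simp only [TX, Matrix.mul_sub]
  abel

end Riccati

section Iteration

variable {A : Matrix (Fin n) (Fin n) ℂ} {B : Matrix (Fin n) (Fin m) ℂ}
  {R : Matrix (Fin m) (Fin m) ℂ} {H X XP : Matrix (Fin n) (Fin n) ℂ}

theorem sub_posSemidef_of_mem_Sge (hR : R.IsHermitian) (hXP : XP.IsHermitian)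
    (hRXP : (RX R B XP).PosDef) (hXPle : (Rop A B R H XP - XP).PosSemidef)
    (hX : X ∈ Sge A B R H) : (X - XP).PosSemidef := by
  obtain ⟨hXh, Y, -, -, hY, hW⟩ := hX
  refine posSemidef_of_posSemidef_CStein hY (hXh.sub hXP) ?_
  have e : CStein (TX A B R Y) (X - XP)
      = (CStein (TX A B R Y) X - HX A B R H Y) + ((Rop A B R H XP - XP) + Kop A B R Y XP) := by
    rw [CStein_sub, eq_add_of_sub_eq' (CStein_TX_sub_HX hR hXP hRXP.isUnit Y)]
    abel
  rw [e]
  exact hW.add (hXPle.add (Kop_posSemidef hRXP.posSemidef Y))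

theorem RX_posDef_of_sub_posSemidef (hRXP : (RX R B XP).PosDef) (hX : (X - XP).PosSemidef) :
    (RX R B X).PosDef := by
  rw [RX_eq_add_RX XP]
  exact hRXP.add_posSemidef (hX.mconj.conjTranspose_mul_mul_same B)

theorem sub_Rop_posSemidef_of_mem_Sge (hR : R.IsHermitian) (hX : X ∈ Sge A B R H)
    (hRX : (RX R B X).PosDef) : (X - Rop A B R H X).PosSemidef := by
  obtain ⟨hXh, Y, -, -, -, hW⟩ := hX
  rw [CStein_TX_sub_HX hR hXh hRX.isUnit Y] at hW
  simpa using hW.add (Kop_posSemidef (A := A) hRX.posSemidef Y)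

theorem spectralRadius_hatM_TX_lt_one_of_mem_Sge (hR : R.IsHermitian) (hXP : XP.IsHermitian)
    (hRXP : (RX R B XP).PosDef) (hXPle : (Rop A B R H XP - XP).PosSemidef)
    (hX : X ∈ Sge A B R H) : spectralRadius ℂ (hatM (TX A B R X)) < 1 := by
  have hΔ := sub_posSemidef_of_mem_Sge hR hXP hRXP hXPle hX
  have hRX := RX_posDef_of_sub_posSemidef hRXP hΔ
  obtain ⟨hXh, Y, -, -, hY, hW⟩ := hX
  refine spectralRadius_hatM_lt_one_of_CStein_sub hY hΔ hRX (TX_sub_TX X Y) ?_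
  change (CStein (TX A B R X) (X - XP) - Kop A B R Y X).PosSemidef
  have e : CStein (TX A B R X) (X - XP) - Kop A B R Y X
      = (CStein (TX A B R Y) X - HX A B R H Y) + ((Rop A B R H XP - XP) + Kop A B R X XP) := by
    rw [CStein_sub, eq_add_of_sub_eq' (CStein_TX_sub_HX hR hXh hRX.isUnit X),
      eq_add_of_sub_eq' (CStein_TX_sub_HX hR hXP hRXP.isUnit X),
      CStein_TX_sub_HX hR hXh hRX.isUnit Y, Kop_self]
    abel
  rw [e]
  exact hW.add (hXPle.add (Kop_posSemidef hRXP.posSemidef X))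

theorem Rop_mem_Sge (hR : R.IsHermitian) (hH : H.IsHermitian) (hX : X.IsHermitian)
    (hXu : IsUnit (RX R B X)) (hρ : spectralRadius ℂ (hatM (TX A B R X)) < 1)
    (hle : (X - Rop A B R H X).PosSemidef) : Rop A B R H X ∈ Sge A B R H := by
  have hRop : Rop A B R H X = (TX A B R X)ᴴ * mconj X * TX A B R X + HX A B R H X := by
    have := CStein_TX_sub_HX (A := A) (H := H) hR hX hXu X
    rw [Kop_self, sub_zero, CStein, sub_sub, sub_right_inj] at this
    exact this.symm
  refine ⟨?_, X, hX, hXu, hρ, ?_⟩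
  · rw [hRop]
    exact (isHermitian_conjTranspose_mul_mul _ hX.mconj).add
      (hH.add (isHermitian_conjTranspose_mul_mul _ hR))
  · have e : CStein (TX A B R X) (Rop A B R H X) - HX A B R H X
        = (TX A B R X)ᴴ * mconj (X - Rop A B R H X) * TX A B R X := by
      rw [CStein, mconj_sub, Matrix.mul_sub, Matrix.sub_mul]
      nth_rewrite 1 [hRop]
      abel
    rw [e]
    exact hle.mconj.conjTranspose_mul_mul_same _

end Iteration

theorem theorem_3_1_i_general (n m : ℕ) (A : Matrix (Fin n) (Fin n) ℂ) (B : Matrix (Fin n) (Fin m) ℂ)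
    (R : Matrix (Fin m) (Fin m) ℂ) (H : Matrix (Fin n) (Fin n) ℂ)
    (hR : R.IsHermitian) (hH : H.IsHermitian)
    (hP : ∃ XP : Matrix (Fin n) (Fin n) ℂ, XP.IsHermitian ∧ (RX R B XP).PosDef ∧
      (Rop A B R H XP - XP).PosSemidef)
    (X : ℕ → Matrix (Fin n) (Fin n) ℂ)
    (hX0 : X 0 ∈ Sge A B R H)
    (hrec : ∀ k : ℕ, X (k + 1) = Rop A B R H (X k)) :
    ∀ k : ℕ, (RX R B (X k)).PosDef ∧ X k ∈ Sge A B R H ∧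
      spectralRadius ℂ (hatM (TX A B R (X k))) < 1 ∧
      (X k - Rop A B R H (X k)).PosSemidef := by
  obtain ⟨XP, hXP, hRXP, hXPle⟩ := hP
  have hRX {Y} (hY : Y ∈ Sge A B R H) : (RX R B Y).PosDef :=
    RX_posDef_of_sub_posSemidef hRXP (sub_posSemidef_of_mem_Sge hR hXP hRXP hXPle hY)
  have hρ {Y} (hY : Y ∈ Sge A B R H) : spectralRadius ℂ (hatM (TX A B R Y)) < 1 :=
    spectralRadius_hatM_TX_lt_one_of_mem_Sge hR hXP hRXP hXPle hY
  have hle {Y} (hY : Y ∈ Sge A B R H) : (Y - Rop A B R H Y).PosSemidef :=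
    sub_Rop_posSemidef_of_mem_Sge hR hY (hRX hY)
  have hmem : ∀ k, X k ∈ Sge A B R H := by
    intro k
    induction k with
    | zero => exact hX0
    | succ k ih => rw [hrec k]; exact Rop_mem_Sge hR hH ih.1 (hRX ih).isUnit (hρ ih) (hle ih)
  exact fun k => ⟨hRX (hmem k), hmem k, hρ (hmem k), hle (hmem k)⟩

/-- Theorem 3.1(i): the fixed-point iteration `X_{k+1} = R(X_k)` starting in `S_≥` is
well-defined, and each iterate lies in `S_≥`, has `ρ(T̂_{X_k}) < 1`, `R_{X_k} ≻ 0`,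
and satisfies `X_k ≥ R(X_k)`. -/
theorem theorem_3_1_i (n m : ℕ) (A : Matrix (Fin n) (Fin n) ℂ) (B : Matrix (Fin n) (Fin m) ℂ)
    (R : Matrix (Fin m) (Fin m) ℂ) (H : Matrix (Fin n) (Fin n) ℂ)
    (hR : R.IsHermitian) (hRunit : IsUnit R) (hH : H.IsHermitian)
    (hP : ∃ XP : Matrix (Fin n) (Fin n) ℂ, XP.IsHermitian ∧ (RX R B XP).PosDef ∧
      (Rop A B R H XP - XP).PosSemidef)
    (hT : ∃ XT : Matrix (Fin n) (Fin n) ℂ, XT.IsHermitian ∧ IsUnit (RX R B XT) ∧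
      spectralRadius ℂ (hatM (TX A B R XT)) < 1)
    (X : ℕ → Matrix (Fin n) (Fin n) ℂ)
    (hX0 : X 0 ∈ Sge A B R H)
    (hrec : ∀ k : ℕ, X (k + 1) = Rop A B R H (X k)) :
    ∀ k : ℕ, (RX R B (X k)).PosDef ∧ X k ∈ Sge A B R H ∧
      spectralRadius ℂ (hatM (TX A B R (X k))) < 1 ∧
      (X k - Rop A B R H (X k)).PosSemidef :=
  theorem_3_1_i_general n m A B R H hR hH hP X hX0 hrec

end CDARE
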